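/- Proposition (localization of physical measures, part c): Let Λ be an attractor for a diffeomorphism f of a compact boundaryless finite-dimensional manifold M, let F be a physical random perturbation of f, and for each small ε > 0 let μ^ε be the unique physical probability measure with Λ ⊆ supp μ^ε contained in the completely forward invariant neighborhood U of Λ (given by the localization proposition). Then Hd(supp μ^ε, Λ) → 0 as ε → 0⁺, where Hd denotes the Hausdorff distance between compact subsets of M. -/

import Mathlib

open MeasureTheory Metric Filter Topology Set
open scoped Manifold ENNReal

noncomputable section

/-- The parameter space `ℝⁿ` of the random perturbations. -/
abbrev Par (n : ℕ) : Type := EuclideanSpace ℝ (Fin n)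

/-- Normalized Lebesgue measure on the closed `ε`-ball of `ℝⁿ`. -/
noncomputable def ballMeasure (n : ℕ) (ε : ℝ) : Measure (Par n) :=
  (volume (closedBall (0 : Par n) ε))⁻¹ • volume.restrict (closedBall (0 : Par n) ε)

/-- The perturbation space `Δ_ε`: sequences of parameter vectors of norm at most `ε`. -/
def Delta (n : ℕ) (ε : ℝ) : Set (ℕ → Par n) := {t | ∀ j, ‖t j‖ ≤ ε}

/-- The perturbed iterates `f^j(x, t̲) = f_{t_j} ∘ ⋯ ∘ f_{t_1} (x)`. -/
def iterP {M : Type*} {n : ℕ} (F : M → Par n → M) : ℕ → M → (ℕ → Par n) → M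
  | 0, x, _ => x
  | k + 1, x, t => F (iterP F k x t) (t k)

/-- `ν` is the infinite product `ν_ε^∞` of the normalized Lebesgue measures on the closed
`ε`-ball, characterized as the probability measure with the correct finite-dimensional
marginals on cylinder sets. -/
def IsProductNoise {n : ℕ} (ε : ℝ) (ν : Measure (ℕ → Par n)) : Prop :=
  IsProbabilityMeasure ν ∧
    ∀ (k : ℕ) (s : Fin k → Set (Par n)), (∀ i, MeasurableSet (s i)) →
      ν {t | ∀ i : Fin k, t (i : ℕ) ∈ s i} = ∏ i, ballMeasure n ε (s i)

/-- The support of a measure: the points all of whose open neighborhoods have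
positive measure. -/
def mSupp {M : Type*} [TopologicalSpace M] [MeasurableSpace M] (μ : Measure M) : Set M :=
  {x | ∀ U : Set M, IsOpen U → x ∈ U → 0 < μ U}

/-- The time averages of every continuous function along the random orbit of `x` driven by
the perturbation vector `t̲` converge to the space average w.r.t. `μ`, i.e. the empirical
measures `(1/N) ∑_{j<N} δ_{f^j(x,t̲)}` converge weakly* to `μ`. -/
def AvgTendsto {M : Type*} [TopologicalSpace M] [MeasurableSpace M] {n : ℕ}
    (F : M → Par n → M) (x : M) (t : ℕ → Par n) (μ : Measure M) : Prop :=
  ∀ φ : C(M, ℝ),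
    Tendsto (fun N : ℕ => (N : ℝ)⁻¹ * ∑ j ∈ Finset.range N, φ (iterP F j x t))
      atTop (𝓝 (∫ y, φ y ∂μ))

/-- The basin `B(μ)` of a measure `μ` under the noise `ν`. -/
def measBasin {M : Type*} [TopologicalSpace M] [MeasurableSpace M] {n : ℕ}
    (ν : Measure (ℕ → Par n)) (F : M → Par n → M) (μ : Measure M) : Set M :=
  {x | ∀ᵐ t ∂ν, AvgTendsto F x t μ}

/-- A physical measure for the perturbation with noise `ν`: a probability measure whose
basin has positive volume. -/
def IsPhysicalMeasure {M : Type*} [TopologicalSpace M] [MeasurableSpace M] {n : ℕ}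
    (m : Measure M) (ν : Measure (ℕ → Par n)) (F : M → Par n → M) (μ : Measure M) : Prop :=
  IsProbabilityMeasure μ ∧ 0 < m (measBasin ν F μ)

/-- The mean sojourn time of the random orbits of `x` exists and equals `μ`:
`(1/N) ∑_{j<N} f^j(x,·)_* ν → μ` weakly*. -/
def SojournTime {M : Type*} [TopologicalSpace M] [MeasurableSpace M] {n : ℕ}
    (ν : Measure (ℕ → Par n)) (F : M → Par n → M) (x : M) (μ : Measure M) : Prop :=
  ∀ φ : C(M, ℝ),
    Tendsto
      (fun N : ℕ => (N : ℝ)⁻¹ * ∑ j ∈ Finset.range N, ∫ t, φ (iterP F j x t) ∂ν)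
      atTop (𝓝 (∫ y, φ y ∂μ))

/-- The mean sojourn time of the whole random system exists and equals `μ`. -/
def GlobalSojourn {M : Type*} [TopologicalSpace M] [MeasurableSpace M] {n : ℕ}
    (m : Measure M) (ν : Measure (ℕ → Par n)) (F : M → Par n → M) (μ : Measure M) : Prop :=
  ∀ φ : C(M, ℝ),
    Tendsto
      (fun N : ℕ => (N : ℝ)⁻¹ *
        ∑ j ∈ Finset.range N, ∫ x, (∫ t, φ (iterP F j x t) ∂ν) ∂m)
      atTop (𝓝 (∫ y, φ y ∂μ))

/-- The skew product `S_ε (x, t̲) = (f_{t₁} x, σ t̲)`. -/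
def skewProd {M : Type*} {n : ℕ} (F : M → Par n → M) :
    M × (ℕ → Par n) → M × (ℕ → Par n) :=
  fun p => (F p.1 (p.2 0), fun j => p.2 (j + 1))

/-- An attractor of `f`: a compact invariant set with a trapping neighborhood `U` with
`Λ = ⋂_{k ≥ 1} f^k (closure U)` and a point with dense forward orbit. -/
structure IsAttractor {M : Type*} [MetricSpace M] (f : M → M) (Λ : Set M) : Prop where
  compact : IsCompact Λ
  invariant : f '' Λ = Λ
  trapped : ∃ U : Set M, IsOpen U ∧ Λ ⊆ U ∧ f '' closure U ⊆ U ∧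
    Λ = ⋂ k : ℕ, f^[k + 1] '' closure U
  transitive : ∃ x ∈ Λ, closure (range fun k : ℕ => f^[k + 1] x) = Λ

/-- The basin of attraction `W^s(Λ)`. -/
def basinAttr {M : Type*} [MetricSpace M] (f : M → M) (Λ : Set M) : Set M :=
  {x | Tendsto (fun k => infDist (f^[k] x) Λ) atTop (𝓝 0)}

/-- `F`, together with the noise measures `ν ε`, the thresholds `K ε` and the radii `ξ ε`,
is a physical random perturbation of the diffeomorphism `f` of the compact boundaryless
manifold `M` with reference (Riemannian volume) measure `m`, for noise levels in `(0, ε₀)`. -/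
structure IsPhysPert (d : ℕ) {n : ℕ} {M : Type*} [MetricSpace M] [CompactSpace M]
    [ChartedSpace (EuclideanSpace ℝ (Fin d)) M] [IsManifold (𝓡 d) ((⊤ : ℕ∞) : WithTop ℕ∞) M]
    [MeasurableSpace M] [BorelSpace M]
    (f : M → M) (m : Measure M) (F : M → Par n → M)
    (ν : ℝ → Measure (ℕ → Par n)) (K : ℝ → ℕ) (ξ : ℝ → ℝ) (ε₀ : ℝ) : Prop where
  eps0_mem : ε₀ ∈ Ioo (0 : ℝ) 1
  smooth : ContMDiff ((𝓡 d).prod (𝓘(ℝ, Par n))) (𝓡 d) 1 (Function.uncurry F)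
  diffeo : ∀ t : Par n, ‖t‖ < 1 →
    ∃ g : Diffeomorph (𝓡 d) (𝓡 d) M M 1, ∀ x, g x = F x t
  base : ∀ x : M, F x 0 = f x
  noise : ∀ ε ∈ Ioo (0 : ℝ) ε₀, IsProductNoise ε (ν ε)
  xi_pos : ∀ ε ∈ Ioo (0 : ℝ) ε₀, 0 < ξ ε
  cover : ∀ ε ∈ Ioo (0 : ℝ) ε₀, ∀ x : M, ∀ j ≥ K ε,
    ball (f^[j] x) (ξ ε) ⊆ (fun t => iterP F j x t) '' Delta n ε
  absCont : ∀ ε ∈ Ioo (0 : ℝ) ε₀, ∀ x : M, ∀ k ≥ K ε,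
    (ν ε).map (fun t => iterP F k x t) ≪ m

/-- The family `ε ↦ με ε`, `0 < ε < εthr`, of localized physical measures near the
attractor `Λ`, inside a completely forward invariant open neighborhood `U` of `Λ`
(the conclusion of the localization proposition). -/
def IsLocalizedPhysFamily {M : Type*} [MetricSpace M] [MeasurableSpace M] {n : ℕ}
    (F : M → Par n → M) (ν : ℝ → Measure (ℕ → Par n))
    (Λ U : Set M) (εthr : ℝ) (με : ℝ → Measure M) : Prop :=
  0 < εthr ∧ IsOpen U ∧ Λ ⊆ U ∧
    ∀ ε ∈ Ioo (0 : ℝ) εthr,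
      IsProbabilityMeasure (με ε) ∧ Λ ⊆ mSupp (με ε) ∧ mSupp (με ε) ⊆ U ∧
      (∀ t : Par n, ‖t‖ ≤ ε → (fun x => F x t) '' closure U ⊆ U) ∧
      ∀ x ∈ U, ∀ᵐ t ∂(ν ε), AvgTendsto F x t (με ε)

/-- Weak* convergence `με ε → μ` as `ε → 0⁺`. -/
def WeakStarAtZero {M : Type*} [TopologicalSpace M] [MeasurableSpace M]
    (με : ℝ → Measure M) (μ : Measure M) : Prop :=
  ∀ φ : C(M, ℝ),
    Tendsto (fun ε => ∫ y, φ y ∂(με ε)) (𝓝[>] (0 : ℝ)) (𝓝 (∫ y, φ y ∂μ))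

/-- `Λ` is a stochastically stable attractor: it carries an `f`-invariant probability
measure `μ` with `supp μ = Λ` to which the localized physical measures `με ε` converge
weakly* as the noise level tends to zero. -/
def IsStochasticallyStable {M : Type*} [MetricSpace M] [MeasurableSpace M]
    (f : M → M) (Λ : Set M) (μ : Measure M) (με : ℝ → Measure M) : Prop :=
  IsProbabilityMeasure μ ∧ μ.map f = μ ∧ mSupp μ = Λ ∧ WeakStarAtZero με μ


section AuxLemmas

variable {n : ℕ} {M : Type*} [MetricSpace M] [CompactSpace M] {F : M → Par n → M}

omit [MetricSpace M] [CompactSpace M] in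
lemma iterP_add (F : M → Par n → M) (a b : ℕ) (x : M) (t : ℕ → Par n) :
    iterP F (a + b) x t = iterP F b (iterP F a x t) (fun j => t (a + j)) := by
  induction b with
  | zero => rfl
  | succ b ih =>
    show F (iterP F (a + b) x t) (t (a + b)) = F (iterP F b (iterP F a x t) _) _
    rw [ih]

lemma uc_aux (hFc : Continuous (Function.uncurry F)) {η : ℝ} (hη : 0 < η) :
    ∃ ε > 0, ε ≤ 1 ∧ ∀ (x : M) (s : Par n), ‖s‖ ≤ ε → dist (F x s) (F x 0) < η := by
  have hK : IsCompact ((univ : Set M) ×ˢ closedBall (0 : Par n) 1) :=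
    isCompact_univ.prod (isCompact_closedBall _ _)
  have hu := hK.uniformContinuousOn_of_continuous hFc.continuousOn
  rw [Metric.uniformContinuousOn_iff] at hu
  obtain ⟨δ, hδ, h⟩ := hu η hη
  refine ⟨min (δ / 2) 1, by positivity, min_le_right _ _, ?_⟩
  intro x s hs
  have hs1 : ‖s‖ ≤ 1 := hs.trans (min_le_right _ _)
  have hmem : (x, s) ∈ (univ : Set M) ×ˢ closedBall (0 : Par n) 1 :=
    ⟨mem_univ _, by simpa [mem_closedBall, dist_zero_right] using hs1⟩
  have hmem0 : (x, (0 : Par n)) ∈ (univ : Set M) ×ˢ closedBall (0 : Par n) 1 :=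
    ⟨mem_univ _, by simp [hδ.le]⟩
  have hdist : dist (x, s) (x, (0 : Par n)) < δ := by
    rw [Prod.dist_eq]
    simp only [dist_self, dist_zero_right]
    have : ‖s‖ ≤ δ / 2 := hs.trans (min_le_left _ _)
    have : max (0 : ℝ) ‖s‖ ≤ δ / 2 := max_le (by positivity) this
    linarith
  exact h _ hmem _ hmem0 hdist

/-- Uniform approximation of random iterates by deterministic iterates, for all
iterates up to a fixed time `k`. -/
lemma iter_approx (hFc : Continuous (Function.uncurry F)) (k : ℕ) :
    ∀ η > 0, ∃ ε > 0, ε ≤ 1 ∧ ∀ (x : M) (t : ℕ → Par n), (∀ j, ‖t j‖ ≤ ε) → ∀ j ≤ k,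
      dist (iterP F j x t) ((fun y => F y 0)^[j] x) < η := by
  have hf0 : Continuous (fun y : M => F y 0) :=
    hFc.comp (continuous_id.prodMk continuous_const)
  have hfu := CompactSpace.uniformContinuous_of_continuous hf0
  rw [Metric.uniformContinuous_iff] at hfu
  induction k with
  | zero =>
    intro η hη
    exact ⟨1, one_pos, le_rfl, fun x t ht j hj => by
      interval_cases j; simpa [iterP] using hη⟩
  | succ k ih =>
    intro η hη
    obtain ⟨δf, hδf, hfδ⟩ := hfu (η / 2) (by positivity)
    obtain ⟨ε₁, hε₁, hε₁1, h₁⟩ := ih (min η δf) (lt_min hη hδf)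
    obtain ⟨ε₂, hε₂, hε₂1, h₂⟩ := uc_aux hFc (show (0:ℝ) < η / 2 by positivity)
    refine ⟨min ε₁ ε₂, lt_min hε₁ hε₂, (min_le_left _ _).trans hε₁1, ?_⟩
    intro x t ht j hj
    have ht₁ : ∀ j, ‖t j‖ ≤ ε₁ := fun j => (ht j).trans (min_le_left _ _)
    have ht₂ : ∀ j, ‖t j‖ ≤ ε₂ := fun j => (ht j).trans (min_le_right _ _)
    rcases Nat.lt_succ_iff_lt_or_eq.1 (Nat.lt_succ_of_le hj) with h | h
    · exact lt_of_lt_of_le (h₁ x t ht₁ j (Nat.lt_succ_iff.1 h)) (min_le_left _ _)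
    · subst h
      have hyz : dist (iterP F k x t) ((fun y => F y 0)^[k] x) < δf :=
        lt_of_lt_of_le (h₁ x t ht₁ k le_rfl) (min_le_right _ _)
      have hstep : dist (iterP F (k + 1) x t)
          ((fun y => F y 0) ((fun y => F y 0)^[k] x)) < η := by
        calc dist (F (iterP F k x t) (t k)) ((fun y => F y 0) ((fun y => F y 0)^[k] x))
            ≤ dist (F (iterP F k x t) (t k)) (F (iterP F k x t) 0)
              + dist ((fun y => F y 0) (iterP F k x t))
                  ((fun y => F y 0) ((fun y => F y 0)^[k] x)) := dist_triangle _ _ _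
          _ < η / 2 + η / 2 := add_lt_add (h₂ _ _ (ht₂ k)) (hfδ hyz)
          _ = η := by ring
      rw [Function.iterate_succ_apply']; exact hstep

lemma delta_ae {n : ℕ} {ε : ℝ} (hε : 0 < ε) {ν : Measure (ℕ → Par n)}
    (hν : IsProductNoise ε ν) : ∀ᵐ t ∂ν, t ∈ Delta n ε := by
  haveI := hν.1
  have hball : ballMeasure n ε (closedBall (0 : Par n) ε) = 1 := by
    have h0 : volume (closedBall (0 : Par n) ε) ≠ 0 :=
      (measure_closedBall_pos _ _ hε).ne'
    have htop : volume (closedBall (0 : Par n) ε) ≠ ⊤ := measure_closedBall_lt_top.ne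
    simp only [ballMeasure, Measure.smul_apply,
      Measure.restrict_apply measurableSet_closedBall, inter_self, smul_eq_mul]
    exact ENNReal.inv_mul_cancel h0 htop
  have hAmeas : ∀ k : ℕ, MeasurableSet
      {t : ℕ → Par n | ∀ i : Fin k, t (i : ℕ) ∈ closedBall (0 : Par n) ε} := by
    intro k
    rw [setOf_forall]
    exact MeasurableSet.iInter fun i =>
      measurableSet_closedBall.preimage (measurable_pi_apply _)
  have hA : ∀ k : ℕ, ν {t | ∀ i : Fin k, t (i : ℕ) ∈ closedBall (0 : Par n) ε} = 1 := by
    intro k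
    rw [hν.2 k (fun _ => closedBall 0 ε) (fun _ => measurableSet_closedBall)]
    simp [hball]
  have hcompl : ∀ k : ℕ,
      ν {t : ℕ → Par n | ∀ i : Fin k, t (i : ℕ) ∈ closedBall (0 : Par n) ε}ᶜ = 0 := by
    intro k
    rw [measure_compl (hAmeas k) (measure_ne_top _ _), hA k, measure_univ, tsub_self]
  have hsub : (Delta n ε)ᶜ ⊆
      ⋃ k : ℕ, {t : ℕ → Par n | ∀ i : Fin (k + 1), t (i : ℕ) ∈ closedBall (0 : Par n) ε}ᶜ := by
    intro t ht
    simp only [Delta, mem_setOf_eq, not_forall, mem_compl_iff] at ht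
    obtain ⟨j, hj⟩ := ht
    refine mem_iUnion.2 ⟨j, fun h => hj ?_⟩
    have := h ⟨j, Nat.lt_succ_self j⟩
    simpa [mem_closedBall, dist_zero_right] using this
  have : ν ((Delta n ε)ᶜ) = 0 :=
    le_antisymm ((measure_mono hsub).trans
      (le_of_eq (measure_iUnion_null fun k => hcompl (k + 1)))) zero_le
  exact MeasureTheory.ae_iff.2 this

end AuxLemmas

/-- **Localization of physical measures, part (c).** If `με ε`, `0 < ε < ε₁`, is the
family of unique localized physical measures with `Λ ⊆ supp (με ε) ⊆ U` near the
attractor `Λ`, then `Hd(supp μ^ε, Λ) → 0` as `ε → 0⁺`, where `Hd` is the Hausdorff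
distance between compact subsets of `M`. -/
theorem localization_part_c
    {d n : ℕ} {M : Type*} [MetricSpace M] [CompactSpace M]
    [ChartedSpace (EuclideanSpace ℝ (Fin d)) M] [IsManifold (𝓡 d) ((⊤ : ℕ∞) : WithTop ℕ∞) M]
    [MeasurableSpace M] [BorelSpace M]
    (f : M → M) (m : Measure M) [IsProbabilityMeasure m] [m.IsOpenPosMeasure]
    (F : M → Par n → M) (ν : ℝ → Measure (ℕ → Par n))
    (K : ℝ → ℕ) (ξ : ℝ → ℝ) (ε₀ : ℝ)
    (hF : IsPhysPert d f m F ν K ξ ε₀)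
    (Λ : Set M) (hΛ : IsAttractor f Λ)
    (U : Set M) (ε₁ : ℝ) (με : ℝ → Measure M)
    (hloc : IsLocalizedPhysFamily F ν Λ U ε₁ με)
    (huniq : ∀ ε ∈ Ioo (0 : ℝ) ε₁, ∀ μ' : Measure M,
      (IsProbabilityMeasure μ' ∧ Λ ⊆ mSupp μ' ∧ mSupp μ' ⊆ U ∧
        ∀ x ∈ U, ∀ᵐ t ∂(ν ε), AvgTendsto F x t μ') → μ' = με ε) :
    Tendsto (fun ε => hausdorffDist (mSupp (με ε)) Λ) (𝓝[>] (0 : ℝ)) (𝓝 0) := by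
  obtain ⟨hε₁pos, hUopen, hΛU, hfam⟩ := hloc
  obtain ⟨x₀, hx₀Λ, -⟩ := hΛ.transitive
  obtain ⟨U', hU'open, hΛU', hfU', hΛeq⟩ := hΛ.trapped
  have hFc : Continuous (Function.uncurry F) := hF.smooth.continuous
  have hf0 : f = fun y => F y 0 := funext fun y => (hF.base y).symm
  have hfc : Continuous f := by
    rw [hf0]; exact hFc.comp (continuous_id.prodMk continuous_const)
  have hε₀ : 0 < ε₀ := hF.eps0_mem.1
  have hΛinv : ∀ j : ℕ, f^[j] x₀ ∈ Λ := by
    intro j; induction j with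
    | zero => exact hx₀Λ
    | succ j ih =>
      rw [Function.iterate_succ_apply', ← hΛ.invariant]
      exact mem_image_of_mem f ih
  have hclU'c : IsCompact (closure U') := isClosed_closure.isCompact
  obtain ⟨r, hr, hrsub⟩ := (hclU'c.image hfc).exists_thickening_subset_open hU'open hfU'
  obtain ⟨εi, hεi, -, hinv⟩ := uc_aux (F := F) hFc hr
  have hstay : ∀ m : ℕ, f^[m] '' closure U' ⊆ closure U' := by
    intro m; induction m with
    | zero => simp
    | succ m ih =>
      rw [Function.iterate_succ, Set.image_comp]
      exact (Set.image_mono (hfU'.trans subset_closure)).trans ih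
  have hmono : Antitone (fun k : ℕ => f^[k + 1] '' closure U') := by
    intro k l hkl
    show f^[l + 1] '' closure U' ≤ f^[k + 1] '' closure U'
    have hl : l + 1 = (k + 1) + (l - k) := by omega
    rw [hl, Function.iterate_add, Set.image_comp]
    exact Set.image_mono (hstay (l - k))
  rw [Metric.tendsto_nhdsWithin_nhds]
  intro δ' hδ'
  set δ := δ' / 8 with hδdef
  have hδ : 0 < δ := by positivity
  have hV'open : IsOpen {y : M | infDist y Λ < δ / 2} :=
    isOpen_lt (continuous_infDist_pt Λ) continuous_const
  obtain ⟨k₀, hk₀⟩ := exists_subset_nhds_of_isCompact hmono.directed_ge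
    (fun k => hclU'c.image (hfc.iterate _))
    (fun y hy => hV'open.mem_nhds (by
      rw [← hΛeq] at hy
      simp only [mem_setOf_eq, infDist_zero_of_mem hy]
      positivity))
  obtain ⟨εA, hεA, -, hA⟩ := iter_approx (F := F) hFc k₀ δ hδ
  obtain ⟨εB, hεB, -, hB⟩ := iter_approx (F := F) hFc (k₀ + 1) (δ / 2) (by positivity)
  refine ⟨min (min εA εB) (min εi (min (ε₁ / 2) (ε₀ / 2))), by positivity, ?_⟩
  intro ε hεmem hεd
  have hε : 0 < ε := hεmem
  have hεb : ε < min (min εA εB) (min εi (min (ε₁ / 2) (ε₀ / 2))) := by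
    rwa [Real.dist_eq, sub_zero, abs_of_pos hε] at hεd
  have hεA' : ε ≤ εA := (hεb.trans_le ((min_le_left _ _).trans (min_le_left _ _))).le
  have hεB' : ε ≤ εB := (hεb.trans_le ((min_le_left _ _).trans (min_le_right _ _))).le
  have hεi' : ε ≤ εi := (hεb.trans_le ((min_le_right _ _).trans (min_le_left _ _))).le
  have hεε₁ : ε < ε₁ := by
    have := hεb.trans_le (((min_le_right _ _).trans (min_le_right _ _)).trans (min_le_left _ _))
    linarith
  have hεε₀ : ε < ε₀ := by
    have := hεb.trans_le (((min_le_right _ _).trans (min_le_right _ _)).trans (min_le_right _ _))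
    linarith
  obtain ⟨hprob, hsuppΛ, hsuppU, hforw, havg⟩ := hfam ε ⟨hε, hεε₁⟩
  have hnoise := hF.noise ε ⟨hε, hεε₀⟩
  haveI := hnoise.1
  have hνne : ν ε ≠ 0 := by
    intro h0
    have h1 : ν ε univ = 1 := measure_univ
    rw [h0] at h1; simp at h1
  haveI : (MeasureTheory.ae (ν ε)).NeBot := MeasureTheory.ae_neBot.2 hνne
  obtain ⟨t, hAvg, htΔ⟩ := ((havg x₀ (hΛU hx₀Λ)).and (delta_ae hε hnoise)).exists
  have ht : ∀ j, ‖t j‖ ≤ ε := htΔ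
  have hclmem : ∀ j, iterP F j x₀ t ∈ closure U' := by
    intro j; induction j with
    | zero => exact subset_closure (hΛU' hx₀Λ)
    | succ j ih =>
      show F (iterP F j x₀ t) (t j) ∈ closure U'
      apply subset_closure
      apply hrsub
      rw [Metric.mem_thickening_iff]
      refine ⟨f (iterP F j x₀ t), mem_image_of_mem f ih, ?_⟩
      have h := hinv (iterP F j x₀ t) (t j) ((ht j).trans hεi')
      rw [hf0]
      exact h
  have horb : ∀ j, infDist (iterP F j x₀ t) Λ < δ := by
    intro j
    rcases le_or_gt j k₀ with hj | hj
    · have h1 := hA x₀ t (fun l => (ht l).trans hεA') j hj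
      rw [← hf0] at h1
      calc infDist (iterP F j x₀ t) Λ
          ≤ infDist (f^[j] x₀) Λ + dist (iterP F j x₀ t) (f^[j] x₀) :=
            infDist_le_infDist_add_dist
        _ < δ := by rw [infDist_zero_of_mem (hΛinv j)]; linarith
    · set i := j - (k₀ + 1) with hi
      have hji : j = i + (k₀ + 1) := by omega
      have hrw : iterP F j x₀ t
          = iterP F (k₀ + 1) (iterP F i x₀ t) (fun l => t (i + l)) := by
        rw [hji]; exact iterP_add F i (k₀ + 1) x₀ t
      have h1 := hB (iterP F i x₀ t) (fun l => t (i + l))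
        (fun l => (ht _).trans hεB') (k₀ + 1) le_rfl
      rw [← hf0] at h1
      have h2 : f^[k₀ + 1] (iterP F i x₀ t) ∈ {y : M | infDist y Λ < δ / 2} :=
        hk₀ (mem_image_of_mem _ (hclmem i))
      rw [hrw]
      calc infDist (iterP F (k₀ + 1) (iterP F i x₀ t) (fun l => t (i + l))) Λ
          ≤ infDist (f^[k₀ + 1] (iterP F i x₀ t)) Λ
            + dist (iterP F (k₀ + 1) (iterP F i x₀ t) (fun l => t (i + l)))
                (f^[k₀ + 1] (iterP F i x₀ t)) := infDist_le_infDist_add_dist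
        _ < δ / 2 + δ / 2 := add_lt_add h2 h1
        _ = δ := by ring
  have hsupp : ∀ y ∈ mSupp (με ε), infDist y Λ ≤ 2 * δ := by
    intro y hy
    by_contra hcon
    push_neg at hcon
    have hballpos : 0 < με ε (ball y (δ / 2)) :=
      hy (ball y (δ / 2)) isOpen_ball (mem_ball_self (by positivity))
    set φ : C(M, ℝ) := ⟨fun w => max (δ - dist w y) 0,
      (continuous_const.sub (continuous_id.dist continuous_const)).max continuous_const⟩
      with hφ
    have hφnn : ∀ w, 0 ≤ φ w := fun w => le_max_right _ _
    have hzero : ∀ j, φ (iterP F j x₀ t) = 0 := by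
      intro j
      have hdy : δ ≤ dist (iterP F j x₀ t) y := by
        by_contra hlt
        push_neg at hlt
        have hle : infDist y Λ ≤ infDist (iterP F j x₀ t) Λ + dist y (iterP F j x₀ t) :=
          infDist_le_infDist_add_dist
        rw [dist_comm] at hlt
        linarith [horb j]
      simp only [hφ, ContinuousMap.coe_mk]
      exact max_eq_right (by linarith)
    have hlim := hAvg φ
    have hfun : (fun N : ℕ => (N : ℝ)⁻¹ * ∑ j ∈ Finset.range N, φ (iterP F j x₀ t))
        = fun _ => (0 : ℝ) := by
      funext N; simp [hzero]
    rw [hfun] at hlim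
    have hint0 : ∫ w, φ w ∂(με ε) = 0 :=
      tendsto_nhds_unique hlim tendsto_const_nhds
    haveI := hprob
    have hintφ : Integrable (fun w => φ w) (με ε) :=
      φ.continuous.integrable_of_hasCompactSupport (HasCompactSupport.of_compactSpace _)
    have h1 : (δ / 2) * (με ε (ball y (δ / 2))).toReal
        ≤ ∫ w in ball y (δ / 2), φ w ∂(με ε) := by
      rw [mul_comm, ← smul_eq_mul, ← measureReal_def]
      apply setIntegral_ge_of_const_le measurableSet_ball (measure_ne_top _ _)
      · intro w hw
        have hw' : dist w y < δ / 2 := mem_ball.1 hw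
        simp only [hφ, ContinuousMap.coe_mk]
        exact le_trans (by linarith) (le_max_left _ _)
      · exact hintφ.integrableOn
    have h2 : ∫ w in ball y (δ / 2), φ w ∂(με ε) ≤ ∫ w, φ w ∂(με ε) :=
      setIntegral_le_integral hintφ (Filter.Eventually.of_forall hφnn)
    have h3 : 0 < (δ / 2) * (με ε (ball y (δ / 2))).toReal :=
      mul_pos (by positivity) (ENNReal.toReal_pos hballpos.ne' (measure_ne_top _ _))
    rw [hint0] at h2
    linarith
  have hHd : hausdorffDist (mSupp (με ε)) Λ ≤ 2 * δ :=
    hausdorffDist_le_of_infDist (by positivity) hsupp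
      (fun x hx => by rw [infDist_zero_of_mem (hsuppΛ hx)]; positivity)
  rw [Real.dist_eq, sub_zero, abs_of_nonneg hausdorffDist_nonneg]
  have : 2 * δ < δ' := by rw [hδdef]; linarith
  linarith
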